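/- In ℝ^10 with coordinates indexed by 2-element subsets of {1,…,5}, define v(I)_{jk} = 1 if |I ∩ {j,k}| = 1 and 0 otherwise, and d_a = v({a}), and let L be the span of d_1,…,d_5. Then the set of four vectors {v({1,2}), v({1,3}), v({1,4}), v({1,5})} is minimally dependent modulo L: a nontrivial combination (namely their sum) lies in L, but no nontrivial combination of any three of them lies in L. -/

import Mathlib

/-- Index type: 2-element subsets of {1,…,n} (modeled as `Fin n`, 0-based). -/
def Pair (n : ℕ) := {s : Finset (Fin n) // s.card = 2}

noncomputable instance (n : ℕ) : Fintype (Pair n) := by unfold Pair; infer_instance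

/-- The vector v(I): coordinate at the pair {j,k} is 1 iff |I ∩ {j,k}| = 1. -/
def v (n : ℕ) (I : Finset (Fin n)) : Pair n → ℝ :=
  fun s => if (I ∩ s.val).card = 1 then 1 else 0

/-- d_a = v({a}). -/
def d (n : ℕ) (a : Fin n) : Pair n → ℝ := v n {a}

/-- The four rays of ψ₁^♮ in M_{0,5} (ends modeled 0-based):
w 0 = v({1,2}), w 1 = v({1,3}), w 2 = v({1,4}), w 3 = v({1,5}). -/
def w : Fin 4 → (Pair 5 → ℝ) := ![v 5 {0, 1}, v 5 {0, 2}, v 5 {0, 3}, v 5 {0, 4}]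

/-!
An element of `L` is a function `{j, k} ↦ t j + t k` on pairs. With the common end of the rays
numbered `0`, the combination `∑ c_b • v({0, b})` takes the value `c_j + c_k` on a pair `{j, k}`
avoiding `0`, and `∑ c - c_k` on `{0, k}`. Comparing on the pairs avoiding `0` gives
`u_j + u_k = 0` for `u_k = t_k - c_k` and all `j ≠ k`, hence `u = 0` once there are at least three
such ends; the pairs `{0, k}` then force all `c_k` to be equal. Conversely, constant coefficients
`r` are realised by `t = ((n - 2) r, r, …, r)`. So a combination of the rays lies in `L` exactly
when its coefficients are all equal, which gives both the relation and its minimality.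
-/

open Submodule Set

theorem eq_zero_of_forall_ne_add_eq_zero {ι K : Type*} [Fintype ι] [Field K] [LinearOrder K]
    [IsStrictOrderedRing K] (hι : 3 ≤ Fintype.card ι) {u : ι → K}
    (h : ∀ i j, i ≠ j → u i + u j = 0) : u = 0 := by
  classical
  funext i
  rw [Pi.zero_apply]
  have hcard : 1 < (Finset.univ.erase i).card := by
    rw [Finset.card_erase_of_mem (Finset.mem_univ i), Finset.card_univ]
    omega
  obtain ⟨j, hj, k, hk, hjk⟩ := Finset.one_lt_card.mp hcard
  linarith [h i j (Finset.ne_of_mem_erase hj).symm, h i k (Finset.ne_of_mem_erase hk).symm,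
    h j k hjk]

theorem d_apply {n : ℕ} (a : Fin n) (s : Pair n) : d n a s = if a ∈ s.val then 1 else 0 := by
  by_cases h : a ∈ s.val <;>
    simp [d, v, h, Finset.singleton_inter_of_mem, Finset.singleton_inter_of_notMem]

theorem mem_span_range_d_iff {n : ℕ} {f : Pair n → ℝ} :
    f ∈ span ℝ (range (d n)) ↔
      ∃ t : Fin n → ℝ, ∀ s : Pair n, f s = ∑ a ∈ s.val, t a := by
  simp only [mem_span_range_iff_exists_fun, funext_iff, Finset.sum_apply, Pi.smul_apply, d_apply,
    smul_eq_mul, mul_ite, mul_one, mul_zero, Finset.sum_ite_mem, Finset.univ_inter]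
  exact exists_congr fun t => forall_congr' fun s => eq_comm

theorem Pair.exists_val_eq_zero_succ_or_succ_succ {n : ℕ} (s : Pair (n + 1)) :
    (∃ k : Fin n, s.val = {0, k.succ}) ∨
      ∃ j k : Fin n, j ≠ k ∧ s.val = {j.succ, k.succ} := by
  obtain ⟨x, y, hxy, hs⟩ := Finset.card_eq_two.mp s.property
  cases x using Fin.cases with
  | zero =>
    cases y using Fin.cases with
    | zero => exact absurd rfl hxy
    | succ k => exact .inl ⟨k, hs⟩
  | succ j =>
    cases y using Fin.cases with
    | zero => exact .inl ⟨j, hs.trans (Finset.pair_comm _ _)⟩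
    | succ k => exact .inr ⟨j, k, fun h => hxy (congrArg Fin.succ h), hs⟩

/-- The ray `v({1, b + 2})` of `ψ₁^♮` on `M_{0,n+1}`, in the paper's numbering of the ends. -/
def psiRay (n : ℕ) (b : Fin n) : Pair (n + 1) → ℝ := v (n + 1) {0, b.succ}

theorem w_eq_psiRay : w = psiRay 4 := by
  funext i
  fin_cases i <;> rfl

theorem psiRay_apply_of_val_eq_succ_succ {n : ℕ} (b j k : Fin n) (s : Pair (n + 1))
    (hs : s.val = {j.succ, k.succ}) :
    psiRay n b s = if b ∈ ({j, k} : Finset (Fin n)) then 1 else 0 := by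
  have hinter :
      {0, b.succ} ∩ s.val = (({b} : Finset (Fin n)) ∩ {j, k}).map (Fin.succEmb n) := by
    ext x; cases x using Fin.cases <;> simp [hs, Fin.succ_ne_zero, eq_comm]
  by_cases hb : b ∈ ({j, k} : Finset (Fin n)) <;>
    simp [psiRay, v, hinter, hb, Finset.singleton_inter_of_mem, Finset.singleton_inter_of_notMem]

theorem psiRay_apply_of_val_eq_zero_succ {n : ℕ} (b k : Fin n) (s : Pair (n + 1))
    (hs : s.val = {0, k.succ}) :
    psiRay n b s = if b = k then 0 else 1 := by
  have hinter : {0, b.succ} ∩ s.val =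
      insert 0 ((({b} : Finset (Fin n)) ∩ {k}).map (Fin.succEmb n)) := by
    ext x; cases x using Fin.cases <;> simp [hs, Fin.succ_ne_zero, eq_comm]
  rw [psiRay, v, hinter]
  by_cases hb : b = k <;>
    simp [hb, Finset.singleton_inter_of_notMem, Finset.card_pair (Fin.succ_ne_zero k).symm]

theorem sum_smul_psiRay_apply_of_val_eq_succ_succ {n : ℕ} (c : Fin n → ℝ) {j k : Fin n}
    (hjk : j ≠ k) (s : Pair (n + 1)) (hs : s.val = {j.succ, k.succ}) :
    (∑ b, c b • psiRay n b) s = c j + c k := by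
  simp only [Finset.sum_apply, Pi.smul_apply, smul_eq_mul,
    psiRay_apply_of_val_eq_succ_succ _ _ _ s hs, mul_ite, mul_one, mul_zero, Finset.sum_ite_mem,
    Finset.univ_inter, Finset.sum_pair hjk]

theorem sum_smul_psiRay_apply_of_val_eq_zero_succ {n : ℕ} (c : Fin n → ℝ) (k : Fin n)
    (s : Pair (n + 1)) (hs : s.val = {0, k.succ}) :
    (∑ b, c b • psiRay n b) s = ∑ b, c b - c k := by
  simp only [Finset.sum_apply, Pi.smul_apply, smul_eq_mul,
    psiRay_apply_of_val_eq_zero_succ _ _ s hs, mul_ite, mul_one, mul_zero, Finset.sum_ite,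
    Finset.sum_const_zero, zero_add, Finset.filter_ne',
    Finset.sum_erase_eq_sub (Finset.mem_univ k)]

theorem sum_smul_psiRay_mem_span_range_d_iff {n : ℕ} (hn : 3 ≤ n) (c : Fin n → ℝ) :
    ∑ b, c b • psiRay n b ∈ span ℝ (range (d (n + 1))) ↔ ∃ r, c = fun _ => r := by
  rw [mem_span_range_d_iff]
  constructor
  · rintro ⟨t, ht⟩
    have hsucc : ∀ j k, j ≠ k → c j + c k = t j.succ + t k.succ := fun j k hjk => by
      have hjk' : j.succ ≠ k.succ := (Fin.succ_injective n).ne hjk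
      let s : Pair (n + 1) := ⟨{j.succ, k.succ}, Finset.card_pair hjk'⟩
      rw [← sum_smul_psiRay_apply_of_val_eq_succ_succ c hjk s rfl, ht s]
      exact Finset.sum_pair hjk'
    have hzero : ∀ k, ∑ b, c b - c k = t 0 + t k.succ := fun k => by
      have h0k : (0 : Fin (n + 1)) ≠ k.succ := (Fin.succ_ne_zero k).symm
      let s : Pair (n + 1) := ⟨{0, k.succ}, Finset.card_pair h0k⟩
      rw [← sum_smul_psiRay_apply_of_val_eq_zero_succ c k s rfl, ht s]
      exact Finset.sum_pair h0k
    have htc : (fun k => t k.succ - c k) = 0 :=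
      eq_zero_of_forall_ne_add_eq_zero (by simpa using hn) fun j k hjk => by
        linarith [hsucc j k hjk]
    refine ⟨(∑ b, c b - t 0) / 2, funext fun k => ?_⟩
    linarith [hzero k, sub_eq_zero.mp (congrFun htc k)]
  · rintro ⟨r, rfl⟩
    refine ⟨Fin.cons ((n - 2 : ℝ) * r) fun _ => r, fun s => ?_⟩
    rcases Pair.exists_val_eq_zero_succ_or_succ_succ s with ⟨k, hs⟩ | ⟨j, k, hjk, hs⟩
    · rw [sum_smul_psiRay_apply_of_val_eq_zero_succ _ k s hs, hs,
        Finset.sum_pair (Fin.succ_ne_zero k).symm]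
      simp only [Finset.sum_const, Finset.card_univ, Fintype.card_fin, nsmul_eq_mul,
        Fin.cons_zero, Fin.cons_succ]
      ring
    · rw [sum_smul_psiRay_apply_of_val_eq_succ_succ _ hjk s hs, hs,
        Finset.sum_pair ((Fin.succ_injective n).ne hjk)]
      simp only [Fin.cons_succ]

/-- {v({1,2}), v({1,3}), v({1,4}), v({1,5})} is minimally dependent modulo
L = span(d₁,…,d₅): their sum lies in L, and no nontrivial combination of a proper
subset lies in L. -/
theorem psi_natural_minimally_dependent :
    (∑ i, w i ∈ Submodule.span ℝ (Set.range (d 5))) ∧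
    ∀ S : Finset (Fin 4), S ≠ Finset.univ →
      ∀ c : Fin 4 → ℝ, (∀ i ∉ S, c i = 0) →
        ∑ i, c i • w i ∈ Submodule.span ℝ (Set.range (d 5)) → c = 0 := by
  have key := sum_smul_psiRay_mem_span_range_d_iff (n := 4) (by norm_num)
  rw [w_eq_psiRay]
  refine ⟨by simpa using (key 1).mpr ⟨1, rfl⟩, fun S hS c hc hmem => ?_⟩
  obtain ⟨i, hi⟩ : ∃ i, i ∉ S := by simpa [Finset.eq_univ_iff_forall] using hS
  obtain ⟨r, rfl⟩ := (key c).mp hmem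
  exact funext fun _ => hc i hi
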